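/- Strict bound on the flux and interior smoothness (Step 1 in the proof of Theorem 3.1). Let ψ(s) = s/√(1+s²). Let h ∈ L¹(a,b) with h(x) ≥ 0 for almost every x ∈ (a,b), and let v ∈ W^{1,1}(a,b). Suppose there is an absolutely continuous function w on [a,b] such that w(x) = ψ(v'(x)) for almost every x ∈ (a,b) and w'(x) = −h(x) for almost every x ∈ (a,b). Then |w(x)| < 1 for every x ∈ (a,b); consequently v has a representative that is continuously differentiable on (a,b) with derivative ψ⁻¹(w) decreasing on (a,b) and locally absolutely continuous on (a,b), and this representative of v is concave on (a,b). -/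

import Mathlib

open Set Filter MeasureTheory Topology

/-!
Since `w' = -h ≤ 0`, the flux `w` is antitone, and `|w| < 1` holds almost everywhere because
`|ψ| < 1`. An antitone function cannot reach `±1` at an interior point without doing so on a
set of positive measure, so `|w| < 1` on `(a,b)`. Then `v' = ψ⁻¹(w)` a.e. with `ψ⁻¹(w)`
continuous and antitone on `(a,b)`, which gives the `C¹` regularity and concavity of `v`. On
`[c,d] ⋐ (a,b)` the values of `w` stay in a compact subinterval of `(-1,1)`, where `ψ⁻¹` is
Lipschitz, so `ψ⁻¹ ∘ w` is absolutely continuous there.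
-/

noncomputable def psi (s : ℝ) : ℝ := s / Real.sqrt (1 + s ^ 2)

-- The inverse of `psi` on `(-1,1)`; outside it `Real.sqrt` returns `0`, and so does `psiInv`.
noncomputable def psiInv (r : ℝ) : ℝ := r / Real.sqrt (1 - r ^ 2)

lemma psi_mem_Ioo (s : ℝ) : psi s ∈ Ioo (-1) 1 := by
  have hpos : 0 < Real.sqrt (1 + s ^ 2) := Real.sqrt_pos.mpr (by positivity)
  rw [mem_Ioo, ← abs_lt, psi, abs_div, abs_of_pos hpos, div_lt_one hpos, ← Real.sqrt_sq_eq_abs]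
  exact Real.sqrt_lt_sqrt (sq_nonneg s) (lt_one_add _)

lemma psiInv_psi (s : ℝ) : psiInv (psi s) = s := by
  have hpos : (0 : ℝ) < 1 + s ^ 2 := by positivity
  have hsq := Real.sq_sqrt hpos.le
  have h1 : 1 - psi s ^ 2 = (1 + s ^ 2)⁻¹ := by
    rw [psi, div_pow, hsq]
    field_simp
    ring
  rw [psiInv, h1, Real.sqrt_inv, psi]
  field_simp

lemma sq_lt_one_of_mem_Ioo {r : ℝ} (hr : r ∈ Ioo (-1) 1) : r ^ 2 < 1 := by
  rwa [sq_lt_one_iff_abs_lt_one, abs_lt]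

lemma contDiffOn_psiInv : ContDiffOn ℝ 1 psiInv (Ioo (-1) 1) := by
  intro r hr
  have : 0 < 1 - r ^ 2 := sub_pos.mpr (sq_lt_one_of_mem_Ioo hr)
  unfold psiInv
  fun_prop (disch := positivity)

lemma hasDerivAt_psiInv {r : ℝ} (hr : r ∈ Ioo (-1) 1) :
    HasDerivAt psiInv (Real.sqrt (1 - r ^ 2) ^ 3)⁻¹ r := by
  have hpos : 0 < 1 - r ^ 2 := sub_pos.mpr (sq_lt_one_of_mem_Ioo hr)
  have hs := Real.sqrt_pos.mpr hpos
  have hsq := Real.sq_sqrt hpos.le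
  have hden : HasDerivAt (fun r : ℝ => Real.sqrt (1 - r ^ 2)) (-r / Real.sqrt (1 - r ^ 2)) r := by
    convert ((hasDerivAt_pow 2 r).const_sub 1).sqrt hpos.ne' using 1
    field_simp
    ring
  refine ((hasDerivAt_id' r).div hden hs.ne').congr_deriv ?_
  field_simp
  linear_combination hsq

lemma strictMonoOn_psiInv : StrictMonoOn psiInv (Ioo (-1) 1) := by
  refine strictMonoOn_of_deriv_pos (convex_Ioo _ _) contDiffOn_psiInv.continuousOn fun r hr => ?_
  rw [interior_Ioo] at hr
  have hpos : 0 < 1 - r ^ 2 := sub_pos.mpr (sq_lt_one_of_mem_Ioo hr)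
  rw [(hasDerivAt_psiInv hr).deriv]
  positivity

lemma exists_lipschitzOnWith_psiInv {l u : ℝ} (hl : -1 < l) (hu : u < 1) :
    ∃ K, LipschitzOnWith K psiInv (Icc l u) :=
  (contDiffOn_psiInv.mono (Icc_subset_Ioo hl hu)).exists_lipschitzOnWith one_ne_zero
    (convex_Icc l u) isCompact_Icc

lemma exists_mem_Ioo_of_ae {a b : ℝ} {p : ℝ → Prop} (hab : a < b)
    (hp : ∀ᵐ x, x ∈ Ioo a b → p x) : ∃ x ∈ Ioo a b, p x :=
  Measure.exists_mem_of_measure_ne_zero_of_ae (by simp [hab])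
    ((ae_restrict_iff' measurableSet_Ioo).mpr hp)

lemma AntitoneOn.mapsTo_Ioo_of_ae {f : ℝ → ℝ} {a b l u : ℝ} (hf : AntitoneOn f (Ioo a b))
    (hae : ∀ᵐ x, x ∈ Ioo a b → f x ∈ Ioo l u) : MapsTo f (Ioo a b) (Ioo l u) := by
  intro x hx
  obtain ⟨s, hs, hfs⟩ := exists_mem_Ioo_of_ae hx.1 <|
    hae.mono fun t ht hts => ht ⟨hts.1, hts.2.trans hx.2⟩
  obtain ⟨t, ht, hft⟩ := exists_mem_Ioo_of_ae hx.2 <|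
    hae.mono fun t ht hts => ht ⟨hx.1.trans hts.1, hts.2⟩
  exact ⟨hft.1.trans_le (hf hx ⟨hx.1.trans ht.1, ht.2⟩ ht.1.le),
    (hf ⟨hs.1, hs.2.trans hx.2⟩ hx hs.2.le).trans_lt hfs.2⟩

section Primitive

variable {F f : ℝ → ℝ} {a b : ℝ}

lemma sub_eq_integral_of_eq_add_integral (hF : ∀ x ∈ Icc a b, F x = F a + ∫ t in a..x, f t)
    (hf : IntegrableOn f (Icc a b)) {x y : ℝ} (hx : x ∈ Icc a b) (hy : y ∈ Icc a b) :
    F y - F x = ∫ t in x..y, f t := by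
  have hint : ∀ z ∈ Icc a b, IntervalIntegrable f volume a z := fun z hz =>
    (hf.mono_set (uIcc_subset_Icc (left_mem_Icc.mpr (hx.1.trans hx.2)) hz)).intervalIntegrable
  rw [hF x hx, hF y hy, ← intervalIntegral.integral_interval_sub_left (hint y hy) (hint x hx)]
  ring

lemma antitoneOn_of_eq_add_integral (hF : ∀ x ∈ Icc a b, F x = F a + ∫ t in a..x, f t)
    (hf : IntegrableOn f (Icc a b)) (hf_nonpos : ∀ᵐ t, t ∈ Ioo a b → f t ≤ 0) :
    AntitoneOn F (Icc a b) := by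
  intro x hx y hy hxy
  rw [← sub_nonpos, sub_eq_integral_of_eq_add_integral hF hf hx hy,
    intervalIntegral.integral_of_le hxy, integral_Ioc_eq_integral_Ioo]
  exact setIntegral_nonpos_ae measurableSet_Ioo <| hf_nonpos.mono fun t ht htxy =>
    ht ⟨hx.1.trans_lt htxy.1, htxy.2.trans_le hy.2⟩

lemma continuousOn_of_eq_add_integral (hF : ∀ x ∈ Icc a b, F x = F a + ∫ t in a..x, f t)
    (hf : IntegrableOn f (Icc a b)) : ContinuousOn F (Icc a b) := by
  refine ((continuousOn_const (c := F a)).add (intervalIntegral.continuousOn_primitive hf)).congr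
    fun x hx => ?_
  rw [hF x hx, intervalIntegral.integral_of_le hx.1]
  rfl

lemma hasDerivAt_of_eq_add_integral {g : ℝ → ℝ} {x : ℝ}
    (hF : ∀ x ∈ Icc a b, F x = F a + ∫ t in a..x, f t) (hf : IntegrableOn f (Icc a b))
    (hfg : ∀ᵐ t, t ∈ Ioo a b → f t = g t) (hg : ContinuousOn g (Ioo a b))
    (hx : x ∈ Ioo a b) :
    HasDerivAt F (g x) x := by
  have hmem : Ioo a b ∈ 𝓝 x := isOpen_Ioo.mem_nhds hx
  have hFg : (fun y => F x + ∫ t in x..y, g t) =ᶠ[𝓝 x] F := by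
    filter_upwards [hmem] with y hy
    have hfg' : ∫ t in x..y, f t = ∫ t in x..y, g t :=
      intervalIntegral.integral_congr_ae <| hfg.mono fun t ht hxy =>
        ht (ordConnected_Ioo.uIcc_subset hx hy (uIoc_subset_uIcc hxy))
    rw [← hfg', ← sub_eq_integral_of_eq_add_integral hF hf (Ioo_subset_Icc_self hx)
      (Ioo_subset_Icc_self hy), add_sub_cancel]
  exact (((intervalIntegral.integral_hasDerivAt_right IntervalIntegrable.refl
    (hg.stronglyMeasurableAtFilter isOpen_Ioo x hx) (hg.continuousAt hmem)).const_add
    (F x))).congr_of_eventuallyEq hFg.symm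

end Primitive

lemma AbsolutelyContinuousOnInterval.congr {X : Type*} [PseudoMetricSpace X] {f g : ℝ → X}
    {a b : ℝ} (hf : AbsolutelyContinuousOnInterval f a b) (hfg : EqOn f g (uIcc a b)) :
    AbsolutelyContinuousOnInterval g a b := by
  rw [absolutelyContinuousOnInterval_iff] at hf ⊢
  intro ε hε
  obtain ⟨δ, hδ, hfδ⟩ := hf ε hε
  refine ⟨δ, hδ, fun E hE hEδ => ?_⟩
  convert hfδ E hE hEδ using 2 with i hi
  rw [hfg (hE.1 i hi).1, hfg (hE.1 i hi).2]

lemma LipschitzOnWith.comp_absolutelyContinuousOnInterval {X Y : Type*} [PseudoMetricSpace X]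
    [PseudoMetricSpace Y] {φ : X → Y} {K : NNReal} {s : Set X} {f : ℝ → X} {a b : ℝ}
    (hφ : LipschitzOnWith K φ s) (hf : AbsolutelyContinuousOnInterval f a b)
    (hfs : MapsTo f (uIcc a b) s) : AbsolutelyContinuousOnInterval (φ ∘ f) a b := by
  rw [absolutelyContinuousOnInterval_iff] at hf ⊢
  intro ε hε
  obtain ⟨δ, hδ, hfδ⟩ := hf (ε / (K + 1)) (by positivity)
  refine ⟨δ, hδ, fun E hE hEδ => ?_⟩
  calc ∑ i ∈ Finset.range E.1, dist (φ (f (E.2 i).1)) (φ (f (E.2 i).2))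
      ≤ ∑ i ∈ Finset.range E.1, K * dist (f (E.2 i).1) (f (E.2 i).2) :=
        Finset.sum_le_sum fun i hi =>
          hφ.dist_le_mul _ (hfs (hE.1 i hi).1) _ (hfs (hE.1 i hi).2)
    _ = K * ∑ i ∈ Finset.range E.1, dist (f (E.2 i).1) (f (E.2 i).2) := by
        rw [Finset.mul_sum]
    _ ≤ K * (ε / (K + 1)) := by gcongr; exact (hfδ E hE hEδ).le
    _ < ε := by
        rw [mul_div_assoc', div_lt_iff₀ (by positivity)]
        nlinarith

lemma absolutelyContinuousOnInterval_of_eq_add_integral {F f : ℝ → ℝ} {a b : ℝ}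
    (hab : a ≤ b) (hF : ∀ x ∈ Icc a b, F x = F a + ∫ t in a..x, f t)
    (hf : IntegrableOn f (Icc a b)) :
    AbsolutelyContinuousOnInterval F a b := by
  have hprim := ((intervalIntegrable_iff_integrableOn_Icc_of_le hab).mpr
    hf).absolutelyContinuousOnInterval_intervalIntegral left_mem_uIcc
  refine ((LipschitzWith.const (F a)).lipschitzOnWith.absolutelyContinuousOnInterval.add
    hprim).congr fun x hx => ?_
  rw [uIcc_of_le hab] at hx
  exact (hF x hx).symm

lemma AbsolutelyContinuousOnInterval.exists_eq_add_integral {f : ℝ → ℝ} {a b : ℝ}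
    (hab : a ≤ b) (hf : AbsolutelyContinuousOnInterval f a b) :
    ∃ f' : ℝ → ℝ, IntegrableOn f' (Icc a b) ∧
      ∀ x ∈ Icc a b, f x = f a + ∫ t in a..x, f' t := by
  refine ⟨deriv f, (intervalIntegrable_iff_integrableOn_Icc_of_le hab).mp
    hf.intervalIntegrable_deriv, fun x hx => ?_⟩
  have hsub : uIcc a x ⊆ uIcc a b := by
    rw [uIcc_of_le hx.1, uIcc_of_le hab]; exact Icc_subset_Icc_right hx.2
  rw [(hf.mono hsub).integral_deriv_eq_sub]
  ring

lemma AntitoneOn.concaveOn_of_hasDerivAt {D : Set ℝ} {f f' : ℝ → ℝ} (hf' : AntitoneOn f' D)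
    (hD : Convex ℝ D) (hDo : IsOpen D) (hf : ∀ x ∈ D, HasDerivAt f (f' x) x) :
    ConcaveOn ℝ D f := by
  refine AntitoneOn.concaveOn_of_deriv hD (fun x hx => (hf x hx).continuousAt.continuousWithinAt)
    ?_ ?_ <;> rw [hDo.interior_eq]
  · exact fun x hx => (hf x hx).differentiableAt.differentiableWithinAt
  · intro x hx y hy hxy
    rw [(hf x hx).deriv, (hf y hy).deriv]
    exact hf' hx hy hxy

theorem flux_strict_bound_interior_smoothness_general
    (a b : ℝ) (h v v' w : ℝ → ℝ)
    -- h ∈ L¹(a,b), h ≥ 0 a.e.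
    (hh_int : IntegrableOn h (Ioo a b))
    (hh_nonneg : ∀ᵐ x ∂volume, x ∈ Ioo a b → 0 ≤ h x)
    -- v ∈ W^{1,1}(a,b)
    (hv'_int : IntegrableOn v' (Ioo a b))
    (hv_ftc : ∀ x ∈ Icc a b, v x = v a + ∫ t in a..x, v' t)
    -- w absolutely continuous on [a,b] with w' = -h a.e. and w = ψ(v') a.e.
    (hw_ftc : ∀ x ∈ Icc a b, w x = w a + ∫ t in a..x, -h t)
    (hw_eq : ∀ᵐ x ∂volume, x ∈ Ioo a b → w x = v' x / Real.sqrt (1 + v' x ^ 2)) :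
    (∀ x ∈ Ioo a b, |w x| < 1) ∧
    (∀ x ∈ Ioo a b, HasDerivAt v (w x / Real.sqrt (1 - w x ^ 2)) x) ∧
    ContinuousOn (fun x => w x / Real.sqrt (1 - w x ^ 2)) (Ioo a b) ∧
    AntitoneOn (fun x => w x / Real.sqrt (1 - w x ^ 2)) (Ioo a b) ∧
    (∀ c d : ℝ, a < c → c ≤ d → d < b → ∃ V : ℝ → ℝ,
      IntegrableOn V (Icc c d) ∧ ∀ x ∈ Icc c d,
        w x / Real.sqrt (1 - w x ^ 2) = w c / Real.sqrt (1 - w c ^ 2) + ∫ t in c..x, V t) ∧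
    ConcaveOn ℝ (Ioo a b) v := by
  have hh : IntegrableOn (fun t => -h t) (Icc a b) :=
    (integrableOn_Icc_iff_integrableOn_Ioo).mpr hh_int.neg
  have hw_anti : AntitoneOn w (Icc a b) := antitoneOn_of_eq_add_integral hw_ftc hh
    (hh_nonneg.mono fun t ht hti => neg_nonpos.mpr (ht hti))
  have hw_mem : MapsTo w (Ioo a b) (Ioo (-1) 1) :=
    (hw_anti.mono Ioo_subset_Icc_self).mapsTo_Ioo_of_ae
      (hw_eq.mono fun t ht hti => ht hti ▸ psi_mem_Ioo (v' t))
  have hg_cont : ContinuousOn (psiInv ∘ w) (Ioo a b) := contDiffOn_psiInv.continuousOn.comp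
    ((continuousOn_of_eq_add_integral hw_ftc hh).mono Ioo_subset_Icc_self) hw_mem
  have hg_anti : AntitoneOn (psiInv ∘ w) (Ioo a b) := fun x hx y hy hxy =>
    strictMonoOn_psiInv.monotoneOn (hw_mem hy) (hw_mem hx)
      (hw_anti (Ioo_subset_Icc_self hx) (Ioo_subset_Icc_self hy) hxy)
  have hv_deriv : ∀ x ∈ Ioo a b, HasDerivAt v (psiInv (w x)) x := fun x hx =>
    hasDerivAt_of_eq_add_integral hv_ftc ((integrableOn_Icc_iff_integrableOn_Ioo).mpr hv'_int)
      (hw_eq.mono fun t ht hti => by rw [Function.comp_apply, ht hti]; exact (psiInv_psi _).symm)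
      hg_cont hx
  refine ⟨fun x hx => abs_lt.mpr (hw_mem hx), hv_deriv, hg_cont, hg_anti,
    fun c d hac hcd hdb => ?_,
    hg_anti.concaveOn_of_hasDerivAt (convex_Ioo a b) isOpen_Ioo hv_deriv⟩
  have hcd_sub : Icc c d ⊆ Ioo a b := Icc_subset_Ioo hac hdb
  obtain ⟨K, hK⟩ := exists_lipschitzOnWith_psiInv (hw_mem (hcd_sub (right_mem_Icc.mpr hcd))).1
    (hw_mem (hcd_sub (left_mem_Icc.mpr hcd))).2
  have hab : a ≤ b := (hac.trans (hcd.trans_lt hdb)).le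
  have hw_ac : AbsolutelyContinuousOnInterval w c d :=
    (absolutelyContinuousOnInterval_of_eq_add_integral hab hw_ftc hh).mono <| by
      rw [uIcc_of_le hcd, uIcc_of_le hab]; exact Icc_subset_Icc hac.le hdb.le
  refine (hK.comp_absolutelyContinuousOnInterval hw_ac ?_).exists_eq_add_integral hcd
  rw [uIcc_of_le hcd]
  exact (hw_anti.mono (hcd_sub.trans Ioo_subset_Icc_self)).mapsTo_Icc

/-- **Strict bound on the flux and interior smoothness (Step 1 in the proof of Theorem 3.1).**
Let `ψ(s) = s/√(1+s²)`, let `h ∈ L¹(a,b)` with `h ≥ 0` a.e., `v ∈ W^{1,1}(a,b)`, and let `w` be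
absolutely continuous on `[a,b]` with `w = ψ(v')` a.e. and `w' = -h` a.e. Then `|w| < 1` on
`(a,b)`, and (the continuous representative of) `v` is continuously differentiable on `(a,b)`
with derivative `ψ⁻¹(w) = w/√(1-w²)` decreasing and locally absolutely continuous on `(a,b)`,
and `v` is concave on `(a,b)`. -/
theorem flux_strict_bound_interior_smoothness
    (a b : ℝ) (hab : a < b) (h v v' w : ℝ → ℝ)
    -- h ∈ L¹(a,b), h ≥ 0 a.e.
    (hh_int : IntegrableOn h (Ioo a b))
    (hh_nonneg : ∀ᵐ x ∂volume, x ∈ Ioo a b → 0 ≤ h x)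
    -- v ∈ W^{1,1}(a,b)
    (hv_cont : ContinuousOn v (Icc a b))
    (hv'_int : IntegrableOn v' (Ioo a b))
    (hv_ftc : ∀ x ∈ Icc a b, v x = v a + ∫ t in a..x, v' t)
    -- w absolutely continuous on [a,b] with w' = -h a.e. and w = ψ(v') a.e.
    (hw_ftc : ∀ x ∈ Icc a b, w x = w a + ∫ t in a..x, -h t)
    (hw_eq : ∀ᵐ x ∂volume, x ∈ Ioo a b → w x = v' x / Real.sqrt (1 + v' x ^ 2)) :
    (∀ x ∈ Ioo a b, |w x| < 1) ∧
    (∀ x ∈ Ioo a b, HasDerivAt v (w x / Real.sqrt (1 - w x ^ 2)) x) ∧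
    ContinuousOn (fun x => w x / Real.sqrt (1 - w x ^ 2)) (Ioo a b) ∧
    AntitoneOn (fun x => w x / Real.sqrt (1 - w x ^ 2)) (Ioo a b) ∧
    (∀ c d : ℝ, a < c → c ≤ d → d < b → ∃ V : ℝ → ℝ,
      IntegrableOn V (Icc c d) ∧ ∀ x ∈ Icc c d,
        w x / Real.sqrt (1 - w x ^ 2) = w c / Real.sqrt (1 - w c ^ 2) + ∫ t in c..x, V t) ∧
    ConcaveOn ℝ (Ioo a b) v :=
  flux_strict_bound_interior_smoothness_general a b h v v' w hh_int hh_nonneg hv'_int hv_ftc hw_ftc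
    hw_eq
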